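/- Suppose t ∈ {0,1,…,m} is such that for every nonempty u′ ⊆ {1,…,s} and every k′ ∈ ℕ₀^{|u′|} with 0 ≤ k′_j ≤ m for all j and Σ_{j∈u′} k′_j ≤ m − t, the matrix C_{u′,k′} has full row rank over F₂. Then the maximal gain coefficient Γ = max over nonempty u ⊆ {1,…,s} and k ∈ {0,1,…,m−1}^{|u|} of Γ_{u,k} satisfies Γ ≤ 2^{t + s − 1}. -/

import Mathlib

open Finset

noncomputable section

/-- The bit vector `i⃗ ∈ F₂^m` of the integer `i = Σ_{ℓ=1}^m i_ℓ 2^{ℓ-1}`. -/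
def bvec (m : ℕ) (i : ℕ) : Fin m → ZMod 2 :=
  fun ℓ => if Nat.testBit i ℓ.1 then 1 else 0

/-- The `(r+1)`-st row (i.e. `r` with 0-indexing) of an `m × m` matrix over `F₂`,
as a vector in `F₂^m`; junk value `0` if `r ≥ m` (never used under the hypotheses below). -/
def rowAt (m : ℕ) (A : Matrix (Fin m) (Fin m) (ZMod 2)) (r : ℕ) : Fin m → ZMod 2 :=
  fun ℓ => if h : r < m then A ⟨r, h⟩ ℓ else 0

/-- The stacked matrix `C_{u,k}`: for each `j ∈ u`, the first `k j` rows of `C j`. -/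
def stack {m s : ℕ} (C : Fin s → Matrix (Fin m) (Fin m) (ZMod 2))
    (u : Finset (Fin s)) (k : Fin s → ℕ) :
    Matrix ((j : {x // x ∈ u}) × Fin (k j.1)) (Fin m) (ZMod 2) :=
  fun p => rowAt m (C p.1.1) p.2.1

/-- `∇C_{u,k}`: the matrix whose rows are the `(k j + 1)`-st rows (1-indexed) of `C j`, `j ∈ u`. -/
def grad {m s : ℕ} (C : Fin s → Matrix (Fin m) (Fin m) (ZMod 2))
    (u : Finset (Fin s)) (k : Fin s → ℕ) :
    Matrix {x // x ∈ u} (Fin m) (ZMod 2) :=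
  fun j => rowAt m (C j.1) (k j.1)

/-- The coordinate `x_{ij} ∈ [0,1)` of the digital net generated by `C₁,…,C_s`:
`x_{ij} = Σ_{ℓ=1}^m y_ℓ 2^{-ℓ}` where `y = C_j · i⃗` over `F₂`. -/
def pt {m s : ℕ} (C : Fin s → Matrix (Fin m) (Fin m) (ZMod 2)) (i : ℕ) (j : Fin s) : ℝ :=
  ∑ ℓ : Fin m, (((C j).mulVec (bvec m i) ℓ).val : ℝ) / 2 ^ (ℓ.1 + 1)

/-- The factor `N`: with `M(x,x') = max{k ∈ ℕ₀ : ⌊2^k x⌋ = ⌊2^k x'⌋}` (the number of matching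
leading binary digits), `Nf x x' c` equals `1` if `M(x,x') > c` (equivalently the first `c+1`
binary digits match), `-1` if `M(x,x') = c` (the first `c` digits match but not `c+1`), and
`0` if `M(x,x') < c`. -/
def Nf (x x' : ℝ) (c : ℕ) : ℤ :=
  if ⌊(2:ℝ) ^ (c + 1) * x⌋ = ⌊(2:ℝ) ^ (c + 1) * x'⌋ then 1
  else if ⌊(2:ℝ) ^ c * x⌋ = ⌊(2:ℝ) ^ c * x'⌋ then -1
  else 0

/-- The gain coefficient `Γ_{u,k} = 2^{-m} Σ_{i=0}^{2^m-1} Σ_{i'=0}^{2^m-1} ∏_{j∈u} N_{i,i',j}`. -/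
def Gam {m s : ℕ} (C : Fin s → Matrix (Fin m) (Fin m) (ZMod 2))
    (u : Finset (Fin s)) (k : Fin s → ℕ) : ℚ :=
  (2 ^ m : ℚ)⁻¹ * ∑ i ∈ Finset.range (2 ^ m), ∑ i' ∈ Finset.range (2 ^ m),
      ∏ j ∈ u, (Nf (pt C i j) (pt C i' j) (k j) : ℚ)


/-!
Write `e = i⃗ + i⃗'` and let `c_j` be the `(k_j+1)`-st row of `C_j`. The factor `N_{i,i',j}`
vanishes unless the first `k_j` binary digits of `C_j e` are zero, and is then `(-1)^(c_j · e)`.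
Hence `Γ_{u,k}` is the sum of the character `e ↦ (-1)^(Σ_j c_j · e)` over the kernel `K` of
`C_{u,k}`, which is `|K| = 2^(dim K)` or `0`. In the first case the `c_j` do not act independently
on `K`, so `C_{u,k+1}` is not of full row rank and `|k| + |u| > m - t`; since rows of `C_{u,k}` can
be dropped down to `min(|k|, m - t)` independent ones, `dim K < t + |u| ≤ t + s`.
-/

open Matrix

-- `d 0` is the most significant digit.
def ofBinaryDigits (d : ℕ → ℕ) : ℕ → ℕ
  | 0 => 0
  | c + 1 => 2 * ofBinaryDigits d c + d c

section BinaryDigits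

variable {d d' : ℕ → ℕ}

theorem sum_range_div_two_pow_eq (c : ℕ) :
    ∑ ℓ ∈ range c, (d ℓ : ℝ) / 2 ^ (ℓ + 1) = ofBinaryDigits d c / 2 ^ c := by
  induction c with
  | zero => simp [ofBinaryDigits]
  | succ c ih =>
    rw [sum_range_succ, ih, ofBinaryDigits]
    push_cast
    field_simp
    ring

theorem ofBinaryDigits_add_div_two_pow (hd : ∀ ℓ, d ℓ < 2) (c j : ℕ) :
    ofBinaryDigits d (c + j) / 2 ^ j = ofBinaryDigits d c := by
  induction j with
  | zero => simp
  | succ j ih =>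
    have hd' := hd (c + j)
    rw [← add_assoc, ofBinaryDigits, pow_succ', ← Nat.div_div_eq_div_mul,
      show (2 * ofBinaryDigits d (c + j) + d (c + j)) / 2 = ofBinaryDigits d (c + j) by omega, ih]

theorem ofBinaryDigits_eq_iff (hd : ∀ ℓ, d ℓ < 2) (hd' : ∀ ℓ, d' ℓ < 2) (c : ℕ) :
    ofBinaryDigits d c = ofBinaryDigits d' c ↔ ∀ ℓ < c, d ℓ = d' ℓ := by
  induction c with
  | zero => simp [ofBinaryDigits]
  | succ c ih =>
    have := hd c
    have := hd' c
    simp only [ofBinaryDigits, Nat.lt_succ_iff_lt_or_eq, or_imp, forall_and, forall_eq, ← ih]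
    omega

end BinaryDigits

def digitsOf {m : ℕ} (y : Fin m → ZMod 2) (ℓ : ℕ) : ℕ :=
  if h : ℓ < m then (y ⟨ℓ, h⟩).val else 0

def fracOfDigits {m : ℕ} (y : Fin m → ZMod 2) : ℝ :=
  ∑ ℓ : Fin m, ((y ℓ).val : ℝ) / 2 ^ (ℓ.1 + 1)

section FracOfDigits

variable {m : ℕ}

theorem digitsOf_lt_two (y : Fin m → ZMod 2) (ℓ : ℕ) : digitsOf y ℓ < 2 := by
  unfold digitsOf
  split
  · exact ZMod.val_lt _
  · omega

theorem fracOfDigits_eq (y : Fin m → ZMod 2) :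
    fracOfDigits y = ofBinaryDigits (digitsOf y) m / 2 ^ m := by
  rw [← sum_range_div_two_pow_eq, ← Fin.sum_univ_eq_sum_range, fracOfDigits]
  simp [digitsOf]

theorem floor_two_pow_mul_fracOfDigits (y : Fin m → ZMod 2) {c : ℕ} (hc : c ≤ m) :
    ⌊(2 : ℝ) ^ c * fracOfDigits y⌋ = ofBinaryDigits (digitsOf y) c := by
  obtain ⟨j, rfl⟩ := Nat.exists_eq_add_of_le hc
  have hdiv : (2 : ℝ) ^ c * fracOfDigits y =
      (ofBinaryDigits (digitsOf y) (c + j) : ℕ) / (2 ^ j : ℕ) := by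
    rw [fracOfDigits_eq, pow_add]
    push_cast
    field_simp
  rw [hdiv, Int.floor_div_natCast, Int.floor_natCast, ← Int.natCast_div,
    ofBinaryDigits_add_div_two_pow (digitsOf_lt_two y)]

theorem floor_two_pow_mul_fracOfDigits_eq_iff (y z : Fin m → ZMod 2) {c : ℕ} (hc : c ≤ m) :
    ⌊(2 : ℝ) ^ c * fracOfDigits y⌋ = ⌊(2 : ℝ) ^ c * fracOfDigits z⌋ ↔
      ∀ ℓ : Fin m, ℓ.1 < c → y ℓ = z ℓ := by
  rw [floor_two_pow_mul_fracOfDigits y hc, floor_two_pow_mul_fracOfDigits z hc, Nat.cast_inj,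
    ofBinaryDigits_eq_iff (digitsOf_lt_two y) (digitsOf_lt_two z)]
  constructor
  · intro h ℓ hℓ
    exact ZMod.val_injective _ (by simpa [digitsOf] using h ℓ hℓ)
  · intro h ℓ hℓ
    simp [digitsOf, lt_of_lt_of_le hℓ hc, h ⟨ℓ, _⟩ hℓ]

end FracOfDigits

def signChar : AddChar (ZMod 2) ℚ :=
  AddChar.zmodChar 2 (by norm_num : (-1 : ℚ) ^ 2 = 1)

theorem signChar_one : signChar 1 = -1 := by
  rw [signChar, AddChar.zmodChar_apply, ZMod.val_one, pow_one]

theorem signChar_eq_one_iff (a : ZMod 2) : signChar a = 1 ↔ a = 0 := by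
  obtain rfl | rfl : a = 0 ∨ a = 1 := by revert a; decide
  · simp
  · norm_num [signChar_one]

theorem signChar_add (a b : ZMod 2) : signChar (a + b) = if a = b then 1 else -1 := by
  have h01 : ∀ x : ZMod 2, x = 0 ∨ x = 1 := by decide
  rcases h01 a with rfl | rfl <;> rcases h01 b with rfl | rfl <;>
    simp [signChar_one, CharTwo.add_self_eq_zero]

theorem Nf_fracOfDigits {m : ℕ} (y z : Fin m → ZMod 2) {c : ℕ} (hc : c < m) :
    (Nf (fracOfDigits y) (fracOfDigits z) c : ℚ) =
      if ∀ ℓ : Fin m, ℓ.1 < c → (y + z) ℓ = 0 then signChar ((y + z) ⟨c, hc⟩) else 0 := by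
  simp only [Pi.add_apply, CharTwo.add_eq_zero, signChar_add]
  have hsucc : (∀ ℓ : Fin m, ℓ.1 < c + 1 → y ℓ = z ℓ) ↔
      (∀ ℓ : Fin m, ℓ.1 < c → y ℓ = z ℓ) ∧ y ⟨c, hc⟩ = z ⟨c, hc⟩ := by
    simp only [Nat.lt_succ_iff_lt_or_eq, or_imp, forall_and]
    refine and_congr_right' ⟨fun h => h _ rfl, fun h ℓ hℓ => ?_⟩
    rwa [show ℓ = ⟨c, hc⟩ from Fin.ext hℓ]
  simp only [Nf, floor_two_pow_mul_fracOfDigits_eq_iff y z hc,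
    floor_two_pow_mul_fracOfDigits_eq_iff y z hc.le, hsucc]
  split_ifs <;> simp_all

theorem AddChar.map_sum_eq_prod {ι A M : Type*} [AddCommMonoid A] [CommMonoid M]
    (ψ : AddChar A M) (t : Finset ι) (f : ι → A) : ψ (∑ i ∈ t, f i) = ∏ i ∈ t, ψ (f i) := by
  classical
  induction t using Finset.induction_on with
  | empty => simp
  | insert j t hj ih => rw [sum_insert hj, prod_insert hj, AddChar.map_add_eq_mul, ih]

theorem Submodule.map_eq_top_of_finrank_eq_finrank_inf_ker_add {K V W : Type*} [Field K]
    [AddCommGroup V] [Module K V] [FiniteDimensional K V] [AddCommGroup W] [Module K W]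
    [FiniteDimensional K W] (p : Submodule K V) (f : V →ₗ[K] W)
    (h : Module.finrank K p = Module.finrank K ↥(p ⊓ LinearMap.ker f) + Module.finrank K W) :
    p.map f = ⊤ := by
  have hrank := (f.domRestrict p).finrank_range_add_finrank_ker
  rw [LinearMap.range_domRestrict, LinearMap.ker_domRestrict,
    ← Submodule.finrank_map_subtype_eq, Submodule.map_comap_subtype] at hrank
  exact Submodule.eq_top_of_finrank_eq (by omega)

theorem sum_range_two_pow_bvec {M : Type*} [AddCommMonoid M] (m : ℕ)
    (f : (Fin m → ZMod 2) → M) :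
    ∑ i ∈ range (2 ^ m), f (bvec m i) = ∑ e, f e := by
  have hinj : Function.Injective fun i : Fin (2 ^ m) => bvec m i := by
    intro i i' h
    refine Fin.ext (Nat.eq_of_testBit_eq fun n => ?_)
    by_cases hn : n < m
    · have := congrFun h ⟨n, hn⟩
      simp only [bvec] at this
      split_ifs at this <;> simp_all
    · have h2 : 2 ^ m ≤ 2 ^ n := Nat.pow_le_pow_right two_pos (not_lt.mp hn)
      rw [Nat.testBit_eq_false_of_lt (i.2.trans_le h2),
        Nat.testBit_eq_false_of_lt (i'.2.trans_le h2)]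
  have hbij : Function.Bijective fun i : Fin (2 ^ m) => bvec m i :=
    (Fintype.bijective_iff_injective_and_card _).mpr ⟨hinj, by simp⟩
  rw [← Fin.sum_univ_eq_sum_range (fun i => f (bvec m i))]
  exact hbij.sum_comp f

section DigitalNet

variable {m s : ℕ} (C : Fin s → Matrix (Fin m) (Fin m) (ZMod 2)) (u : Finset (Fin s))
  (k : Fin s → ℕ)

def kerStack : Submodule (ZMod 2) (Fin m → ZMod 2) :=
  LinearMap.ker (stack C u k).mulVecLin

def gradSum : (Fin m → ZMod 2) →+ ZMod 2 where
  toFun e := ∑ j, (grad C u k *ᵥ e) j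
  map_zero' := by simp
  map_add' e e' := by simp [mulVec_add, sum_add_distrib]

def HasFullRankStacks (n : ℕ) : Prop :=
  ∀ u' : Finset (Fin s), u'.Nonempty → ∀ k' : Fin s → ℕ,
    (∀ j ∈ u', k' j ≤ m) → ∑ j ∈ u', k' j ≤ n → (stack C u' k').rank = ∑ j ∈ u', k' j

variable {C u k}

theorem rowAt_dotProduct (A : Matrix (Fin m) (Fin m) (ZMod 2)) (e : Fin m → ZMod 2) {r : ℕ}
    (hr : r < m) : rowAt m A r ⬝ᵥ e = (A *ᵥ e) ⟨r, hr⟩ := by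
  unfold rowAt
  simp only [dif_pos hr]
  rfl

theorem stack_mulVec_apply (e : Fin m → ZMod 2) (p : (j : {x // x ∈ u}) × Fin (k j.1)) :
    (stack C u k *ᵥ e) p = rowAt m (C p.1.1) p.2.1 ⬝ᵥ e :=
  rfl

theorem mem_kerStack_iff (hk : ∀ j ∈ u, k j ≤ m) (e : Fin m → ZMod 2) :
    e ∈ kerStack C u k ↔ ∀ j ∈ u, ∀ ℓ : Fin m, ℓ.1 < k j → (C j *ᵥ e) ℓ = 0 := by
  simp only [kerStack, LinearMap.mem_ker, mulVecLin_apply, funext_iff, Pi.zero_apply]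
  constructor
  · intro h j hj ℓ hℓ
    simpa [stack_mulVec_apply, rowAt_dotProduct] using h ⟨⟨j, hj⟩, ⟨ℓ, hℓ⟩⟩
  · rintro h ⟨⟨j, hj⟩, r⟩
    have hr : r.1 < m := r.2.trans_le (hk j hj)
    simpa [stack_mulVec_apply, rowAt_dotProduct _ _ hr] using h j hj ⟨r, hr⟩ r.2

theorem gradSum_apply (e : Fin m → ZMod 2) :
    gradSum C u k e = ∑ j ∈ u, rowAt m (C j) (k j) ⬝ᵥ e :=
  sum_coe_sort u fun j => rowAt m (C j) (k j) ⬝ᵥ e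

theorem Nf_pt (i i' : ℕ) (j : Fin s) {c : ℕ} (hc : c < m) :
    (Nf (pt C i j) (pt C i' j) c : ℚ) =
      if ∀ ℓ : Fin m, ℓ.1 < c → (C j *ᵥ (bvec m i + bvec m i')) ℓ = 0
      then signChar (rowAt m (C j) c ⬝ᵥ (bvec m i + bvec m i')) else 0 := by
  rw [rowAt_dotProduct _ _ hc, mulVec_add]
  exact Nf_fracOfDigits _ _ hc

open scoped Classical in
theorem prod_Nf_pt (hk : ∀ j ∈ u, k j < m) (i i' : ℕ) :
    ∏ j ∈ u, (Nf (pt C i j) (pt C i' j) (k j) : ℚ) =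
      if bvec m i + bvec m i' ∈ kerStack C u k
      then signChar (gradSum C u k (bvec m i + bvec m i')) else 0 := by
  rw [prod_congr rfl fun j hj => Nf_pt i i' j (hk j hj), prod_ite_zero,
    gradSum_apply, AddChar.map_sum_eq_prod]
  congr 1
  exact propext (mem_kerStack_iff (fun j hj => (hk j hj).le) _).symm

open scoped Classical in
theorem Gam_eq_sum_kerStack (hk : ∀ j ∈ u, k j < m) :
    Gam C u k = ∑ e : kerStack C u k, signChar (gradSum C u k e) := by
  set F : (Fin m → ZMod 2) → ℚ := fun e =>
    if e ∈ kerStack C u k then signChar (gradSum C u k e) else 0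
  have hinner (i : ℕ) :
      ∑ i' ∈ range (2 ^ m), ∏ j ∈ u, (Nf (pt C i j) (pt C i' j) (k j) : ℚ) = ∑ e, F e := by
    simp only [prod_Nf_pt hk]
    rw [sum_range_two_pow_bvec m fun e => F (bvec m i + e)]
    exact Equiv.sum_comp (Equiv.addLeft (bvec m i)) F
  have hF : ∑ e, F e = ∑ e : kerStack C u k, signChar (gradSum C u k e) := by
    rw [← sum_filter, sum_subtype _ (p := (· ∈ kerStack C u k)) (by simp)]
  rw [Gam, sum_congr rfl fun i _ => hinner i, sum_const, card_range, nsmul_eq_mul, hF]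
  push_cast
  rw [← mul_assoc, inv_mul_cancel₀ (by positivity), one_mul]

variable (C u k) in
theorem finrank_kerStack_add_rank :
    Module.finrank (ZMod 2) (kerStack C u k) + (stack C u k).rank = m := by
  have := (stack C u k).mulVecLin.finrank_range_add_finrank_ker
  rw [Module.finrank_fintype_fun_eq_card, Fintype.card_fin] at this
  rw [Matrix.rank, kerStack]
  omega

theorem kerStack_anti {k' : Fin s → ℕ} (hle : ∀ j, k' j ≤ k j) :
    kerStack C u k ≤ kerStack C u k' := by
  intro e he
  simp only [kerStack, LinearMap.mem_ker, mulVecLin_apply, funext_iff, Pi.zero_apply] at he ⊢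
  exact fun p => he ⟨p.1, ⟨p.2, p.2.2.trans_le (hle _)⟩⟩

theorem kerStack_succ :
    kerStack C u (fun j => k j + 1) = kerStack C u k ⊓ LinearMap.ker (grad C u k).mulVecLin := by
  ext e
  simp only [kerStack, Submodule.mem_inf, LinearMap.mem_ker, mulVecLin_apply, funext_iff,
    Pi.zero_apply, stack_mulVec_apply]
  constructor
  · intro h
    exact ⟨fun p => h ⟨p.1, ⟨p.2, by omega⟩⟩, fun j => h ⟨j, ⟨k j, by omega⟩⟩⟩
  · rintro ⟨h, hgrad⟩ ⟨j, r⟩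
    rcases Nat.lt_succ_iff_lt_or_eq.mp r.2 with hr | hr
    · exact h ⟨j, ⟨r, hr⟩⟩
    · rw [hr]
      exact hgrad j

theorem finrank_kerStack_of_sum_le {n : ℕ} (hC : HasFullRankStacks C n) (hu : u.Nonempty)
    (hk : ∀ j ∈ u, k j ≤ m) (hkn : ∑ j ∈ u, k j ≤ n) :
    Module.finrank (ZMod 2) (kerStack C u k) + ∑ j ∈ u, k j = m := by
  rw [← hC u hu k hk hkn, finrank_kerStack_add_rank]

theorem finrank_kerStack_add_min_le {n : ℕ} (hC : HasFullRankStacks C n) (hu : u.Nonempty)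
    (hk : ∀ j ∈ u, k j ≤ m) :
    Module.finrank (ZMod 2) (kerStack C u k) + min (∑ j ∈ u, k j) n ≤ m := by
  obtain ⟨N, hN⟩ : ∃ N, ∑ j ∈ u, k j = N := ⟨_, rfl⟩
  induction N generalizing k with
  | zero => have := finrank_kerStack_of_sum_le hC hu hk (by omega); omega
  | succ N ih =>
    by_cases hkn : N + 1 ≤ n
    · have := finrank_kerStack_of_sum_le hC hu hk (by omega); omega
    obtain ⟨j₀, hj₀, hkj₀⟩ := exists_ne_zero_of_sum_ne_zero (hN.trans_ne N.succ_ne_zero)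
    classical
    set k' := Function.update k j₀ (k j₀ - 1)
    have hk'N : ∑ j ∈ u, k' j = N := by
      have := sum_eq_add_sum_sdiff_singleton (s := u) j₀ k (absurd hj₀)
      rw [sum_update_of_mem hj₀]
      omega
    have hk'le : ∀ j, k' j ≤ k j := by
      intro j
      rcases eq_or_ne j j₀ with rfl | hj
      · simp [k']
      · simp [k', hj]
    have hmono := Submodule.finrank_mono (kerStack_anti (u := u) (C := C) hk'le)
    have := ih (fun j hj => (hk'le j).trans (hk j hj)) hk'N
    omega

theorem exists_mem_kerStack_gradSum_eq_one {n : ℕ} (hC : HasFullRankStacks C n)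
    (hu : u.Nonempty) (hk : ∀ j ∈ u, k j < m) (hkn : ∑ j ∈ u, k j + u.card ≤ n) :
    ∃ e ∈ kerStack C u k, gradSum C u k e = 1 := by
  have hsucc : ∑ j ∈ u, (k j + 1) = ∑ j ∈ u, k j + u.card := by
    rw [sum_add_distrib, sum_const, smul_eq_mul, mul_one]
  have hdim := finrank_kerStack_of_sum_le hC hu (fun j hj => (hk j hj).le) (by omega)
  have hdim' := finrank_kerStack_of_sum_le hC hu (k := fun j => k j + 1) hk (by omega)
  rw [kerStack_succ, hsucc] at hdim'
  have htop := Submodule.map_eq_top_of_finrank_eq_finrank_inf_ker_add (kerStack C u k)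
    (grad C u k).mulVecLin
    (by simp only [Module.finrank_fintype_fun_eq_card, Fintype.card_coe]; omega)
  obtain ⟨j₀, hj₀⟩ := hu
  obtain ⟨e, he, hGe⟩ : Pi.single ⟨j₀, hj₀⟩ 1 ∈ (kerStack C u k).map (grad C u k).mulVecLin :=
    htop ▸ Submodule.mem_top
  refine ⟨e, he, ?_⟩
  change ∑ j, (grad C u k).mulVecLin e j = 1
  rw [hGe, Fintype.sum_pi_single']

theorem finrank_kerStack_lt {n : ℕ} (hC : HasFullRankStacks C n) (hu : u.Nonempty)
    (hk : ∀ j ∈ u, k j < m) (htriv : ∀ e ∈ kerStack C u k, gradSum C u k e = 0) :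
    Module.finrank (ZMod 2) (kerStack C u k) < m - n + u.card := by
  have hbound := finrank_kerStack_add_min_le hC hu fun j hj => (hk j hj).le
  have hcard := hu.card_pos
  by_contra! hge
  have hkn : ∑ j ∈ u, k j + u.card ≤ n := by omega
  obtain ⟨e, he, he1⟩ := exists_mem_kerStack_gradSum_eq_one hC hu hk hkn
  exact one_ne_zero (he1.symm.trans (htriv e he))

end DigitalNet

theorem statement_general (m s : ℕ) (hm : 1 ≤ m)
    (C : Fin s → Matrix (Fin m) (Fin m) (ZMod 2))
    (t : ℕ)
    (hnet : ∀ u' : Finset (Fin s), u'.Nonempty → ∀ k' : Fin s → ℕ,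
      (∀ j ∈ u', k' j ≤ m) → (∑ j ∈ u', k' j) ≤ m - t →
      (stack C u' k').rank = ∑ j ∈ u', k' j) :
    ∀ u : Finset (Fin s), u.Nonempty → ∀ k : Fin s → ℕ, (∀ j ∈ u, k j ≤ m - 1) →
      Gam C u k ≤ (2 : ℚ) ^ (t + s - 1) := by
  intro u hu k hk
  have hkm : ∀ j ∈ u, k j < m := fun j hj => by have := hk j hj; omega
  classical
  rw [Gam_eq_sum_kerStack hkm]
  let ψ : AddChar (kerStack C u k) ℚ :=
    signChar.compAddMonoidHom ((gradSum C u k).comp (kerStack C u k).subtype.toAddMonoidHom)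
  change ∑ e, ψ e ≤ _
  rw [AddChar.sum_eq_ite]
  split_ifs with hψ
  · have htriv (e) (he : e ∈ kerStack C u k) : gradSum C u k e = 0 :=
      (signChar_eq_one_iff _).mp (AddChar.eq_zero_iff.mp hψ ⟨e, he⟩)
    have hdim := finrank_kerStack_lt hnet hu hkm htriv
    have hus : u.card ≤ s := (card_le_univ u).trans_eq (Fintype.card_fin s)
    rw [Module.card_eq_pow_finrank (K := ZMod 2), ZMod.card]
    push_cast
    exact pow_le_pow_right₀ one_le_two (by omega)
  · positivity

theorem statement (m s : ℕ) (hm : 1 ≤ m) (hs : 1 ≤ s)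
    (C : Fin s → Matrix (Fin m) (Fin m) (ZMod 2))
    (t : ℕ) (htm : t ≤ m)
    (hnet : ∀ u' : Finset (Fin s), u'.Nonempty → ∀ k' : Fin s → ℕ,
      (∀ j ∈ u', k' j ≤ m) → (∑ j ∈ u', k' j) ≤ m - t →
      (stack C u' k').rank = ∑ j ∈ u', k' j) :
    ∀ u : Finset (Fin s), u.Nonempty → ∀ k : Fin s → ℕ, (∀ j ∈ u, k j ≤ m - 1) →
      Gam C u k ≤ (2 : ℚ) ^ (t + s - 1) :=
  statement_general m s hm C t hnet

end
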